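/- arXiv:2006.00534 — 16 statements merged into one kernel-verified Lean document; each statement's English description precedes it below -/
import Mathlib

section
/- If H is a subgroup of an abelian group G, and a subset C of H is a minimal complement in H (i.e., there exists W ⊆ H with W + C = H and no proper subset C' ⊂ C satisfies W + C' = H), then C is also a minimal complement in G (i.e., there exists W' ⊆ G with W' + C = G and no proper subset of C is a complement for W' in G). -/
open Pointwise

/-- If a subset `C` of a subgroup `H` of an abelian group `G` is a minimal complement
in `H`, then it is a minimal complement in `G`. -/
theorem minimal_complement_of_subgroup {G : Type*} [AddCommGroup G] (H : AddSubgroup G)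
    (C : Set G) (hC : C ⊆ (H : Set G))
    (hmin : ∃ W : Set G, W ⊆ (H : Set G) ∧ W + C = (H : Set G) ∧
      ∀ C' : Set G, C' ⊂ C → W + C' ≠ (H : Set G)) :
    ∃ W' : Set G, W' + C = Set.univ ∧ ∀ C' : Set G, C' ⊂ C → W' + C' ≠ Set.univ := by
  classical
  obtain ⟨W, hWH, hWC, hminC⟩ := hmin
  set r : G ⧸ H → G := fun q => if q = 0 then 0 else Quotient.out q with hr
  have hrq : ∀ q : G ⧸ H, ((r q : G) : G ⧸ H) = q := by
    intro q
    by_cases h : q = 0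
    · simp [hr, h]
    · simp only [hr, h, if_false]
      exact Quotient.out_eq q
  have hr0 : ∀ q : G ⧸ H, r q ∈ H → q = 0 := by
    intro q hq
    have : ((r q : G) : G ⧸ H) = 0 := (QuotientAddGroup.eq_zero_iff _).2 hq
    rw [hrq] at this; exact this
  set T : Set G := Set.range r with hT
  refine ⟨T + W, ?_, ?_⟩
  · have : T + W + C = T + (W + C) := add_assoc T W C
    rw [this, hWC]
    ext g
    simp only [Set.mem_univ, iff_true]
    refine ⟨r (g : G ⧸ H), ⟨(g : G ⧸ H), rfl⟩, g - r (g : G ⧸ H), ?_, by simp⟩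
    have : ((g - r (g : G ⧸ H) : G) : G ⧸ H) = 0 := by
      rw [QuotientAddGroup.mk_sub, hrq, sub_self]
    exact (QuotientAddGroup.eq_zero_iff _).1 this
  · intro C' hC' hcontra
    apply hminC C' hC'
    apply le_antisymm
    · calc W + C' ⊆ W + C := Set.add_subset_add_left hC'.subset
        _ = (H : Set G) := hWC
    · intro h hh
      have : h ∈ T + W + C' := by rw [hcontra]; trivial
      rw [add_assoc] at this
      obtain ⟨t, ⟨q, rfl⟩, x, hx, rfl⟩ := this
      obtain ⟨w, hw, c', hc'2, rfl⟩ := hx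
      have hwH : w ∈ H := hWH hw
      have hcH : c' ∈ H := hC (hC'.subset hc'2)
      have hrH : r q ∈ H := by
        have := hh
        have : r q = (r q + (w + c')) - (w + c') := by abel
        rw [this]
        exact H.sub_mem hh (H.add_mem hwH hcH)
      have hq0 : q = 0 := hr0 q hrH
      have : r q = 0 := by simp [hr, hq0]
      exact ⟨w, hw, c', hc'2, by simp [this]⟩
end

section
/- Let C be a subset of an abelian group G and π : G → H a surjective group homomorphism whose restriction to C is injective. If π(C) is a minimal complement in H, then C is a minimal complement in G. -/
/-! The witness is `π⁻¹(W)`: since `π⁻¹(W) + C' = π⁻¹(W + π(C'))` and `π` is surjective,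
`π⁻¹(W) + C'` covers `G` exactly when `W + π(C')` covers `H`, and injectivity on `C` keeps
proper subsets of `C` proper after applying `π`. -/

open Pointwise

@[to_additive]
theorem Set.preimage_mul_eq_preimage_mul_image {G H : Type*} [Group G] [Group H]
    (f : G →* H) (s : Set H) (t : Set G) : f ⁻¹' s * t = f ⁻¹' (s * f '' t) := by
  ext x
  simp only [Set.mem_mul, Set.mem_preimage, Set.mem_image]
  constructor
  · rintro ⟨a, ha, c, hc, rfl⟩
    exact ⟨f a, ha, f c, ⟨c, hc, rfl⟩, (map_mul f a c).symm⟩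
  · rintro ⟨w, hw, _, ⟨c, hc, rfl⟩, hx⟩
    refine ⟨x / c, ?_, c, hc, div_mul_cancel x c⟩
    rwa [map_div, ← hx, mul_div_cancel_right]

/-- If `π : G → H` is a surjective homomorphism injective on `C` and `π(C)` is a minimal
complement in `H`, then `C` is a minimal complement in `G`. -/
theorem minimal_complement_of_quotient {G H : Type*} [AddCommGroup G] [AddCommGroup H]
    (π : G →+ H) (hsurj : Function.Surjective π) (C : Set G) (hinj : Set.InjOn π C)
    (hmin : ∃ W : Set H, W + (π '' C) = Set.univ ∧
      ∀ C' : Set H, C' ⊂ π '' C → W + C' ≠ Set.univ) :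
    ∃ W' : Set G, W' + C = Set.univ ∧ ∀ C' : Set G, C' ⊂ C → W' + C' ≠ Set.univ := by
  obtain ⟨W, hW, hWmin⟩ := hmin
  refine ⟨π ⁻¹' W, by rw [Set.preimage_add_eq_preimage_add_image, hW, Set.preimage_univ], ?_⟩
  intro C' hC' hcover
  have hC'_image : π '' C' ⊂ π '' C :=
    (hinj.image_ssubset_image_iff hC'.subset subset_rfl).mpr hC'
  apply hWmin (π '' C') hC'_image
  rwa [Set.preimage_add_eq_preimage_add_image, Set.preimage_eq_univ_iff, hsurj.range_eq,
    Set.univ_subset_iff] at hcover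
end

section
/- Let G be a finite abelian group and W ⊆ G a nonempty subset. If C is a minimal complement for W in G, then |C| ≤ |G| · |W| / (2|W| − 1). -/
open Pointwise

/-- If `C` is a minimal complement for a nonempty `W` in a finite abelian group `G`,
then `|C| ≤ |G|·|W|/(2|W|−1)`. -/
theorem card_minimal_complement_le {G : Type*} [AddCommGroup G] [Fintype G]
    (W C : Set G) (hW : W.Nonempty)
    (hcompl : W + C = Set.univ)
    (hmin : ∀ C' : Set G, C' ⊂ C → W + C' ≠ Set.univ) :
    (C.ncard : ℚ) ≤ (Fintype.card G : ℚ) * W.ncard / (2 * W.ncard - 1) := by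
  classical
  have hWfin : W.Finite := W.toFinite
  have hCfin : C.Finite := C.toFinite
  set Wf := hWfin.toFinset with hWfdef
  set Cf := hCfin.toFinset with hCfdef
  have hWcard : W.ncard = Wf.card := Set.ncard_eq_toFinset_card W hWfin
  have hCcard : C.ncard = Cf.card := Set.ncard_eq_toFinset_card C hCfin
  have hWpos : 1 ≤ Wf.card := by
    obtain ⟨w, hw⟩ := hW
    exact Finset.card_pos.mpr ⟨w, hWfin.mem_toFinset.mpr hw⟩
  set r : G → ℕ := fun g => ((Wf ×ˢ Cf).filter fun p => p.1 + p.2 = g).card with hrdef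
  -- total count
  have hsum : ∑ g : G, r g = Wf.card * Cf.card := by
    rw [← Finset.card_product]
    exact (Finset.card_eq_sum_card_fiberwise
      (fun p _ => Finset.mem_univ (p.1 + p.2))).symm
  -- pointwise upper bound
  have hrle : ∀ g : G, r g ≤ Wf.card := by
    intro g
    apply Finset.card_le_card_of_injOn (fun p => p.1)
    · intro p hp
      exact (Finset.mem_product.mp (Finset.mem_filter.mp hp).1).1
    · intro p hp q hq h
      have hp' := (Finset.mem_filter.mp hp).2
      have hq' := (Finset.mem_filter.mp hq).2
      have h' : p.1 = q.1 := h
      have : p.2 = q.2 := by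
        have hx : p.1 + p.2 = q.1 + q.2 := by rw [hp', hq']
        rw [h'] at hx
        exact add_left_cancel hx
      exact Prod.ext h' this
  -- private elements
  have key : ∀ c : G, ∃ g : G, c ∈ Cf →
      (∀ p ∈ Wf ×ˢ Cf, p.1 + p.2 = g → p.2 = c) ∧ 0 < r g := by
    intro c
    by_cases hc : c ∈ Cf
    · have hcC : c ∈ C := hCfin.mem_toFinset.mp hc
      have hss : C \ {c} ⊂ C := Set.sdiff_singleton_ssubset.mpr hcC
      have hne := hmin _ hss
      have hex : ∃ g, g ∉ W + (C \ {c}) := by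
        by_contra h
        push_neg at h
        exact hne (Set.eq_univ_of_forall h)
      obtain ⟨g, hg⟩ := hex
      refine ⟨g, fun _ => ⟨?_, ?_⟩⟩
      · intro p hp hpg
        by_contra hne2
        apply hg
        have hp1 : p.1 ∈ W := hWfin.mem_toFinset.mp (Finset.mem_product.mp hp).1
        have hp2 : p.2 ∈ C \ {c} :=
          ⟨hCfin.mem_toFinset.mp (Finset.mem_product.mp hp).2, hne2⟩
        exact hpg ▸ Set.add_mem_add hp1 hp2
      · have hg2 : g ∈ W + C := by rw [hcompl]; exact Set.mem_univ g
        obtain ⟨w, hw, c', hc', hwc⟩ := Set.mem_add.mp hg2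
        apply Finset.card_pos.mpr
        refine ⟨(w, c'), Finset.mem_filter.mpr ⟨Finset.mem_product.mpr
          ⟨hWfin.mem_toFinset.mpr hw, hCfin.mem_toFinset.mpr hc'⟩, hwc⟩⟩
    · exact ⟨0, fun h => absurd h hc⟩
  choose gc hgc using key
  have hinj : Set.InjOn gc ↑Cf := by
    intro c hc c' hc' heq
    obtain ⟨huniq, hpos⟩ := hgc c hc
    obtain ⟨huniq', _⟩ := hgc c' hc'
    obtain ⟨p, hp⟩ := Finset.card_pos.mp hpos
    have hp1 := (Finset.mem_filter.mp hp).1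
    have hp2 := (Finset.mem_filter.mp hp).2
    have e1 : p.2 = c := huniq p hp1 hp2
    have e2 : p.2 = c' := huniq' p hp1 (by rw [hp2, heq])
    rw [← e1, e2]
  set P := Cf.image gc with hPdef
  have hPcard : P.card = Cf.card := Finset.card_image_of_injOn hinj
  have hP1 : ∀ g ∈ P, r g = 1 := by
    intro g hg
    obtain ⟨c, hc, hgc'⟩ := Finset.mem_image.mp hg
    obtain ⟨huniq, hpos⟩ := hgc c hc
    rw [← hgc'] at *
    refine le_antisymm (Finset.card_le_one.mpr ?_) hpos
    intro p hp q hq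
    have hp2 : p.2 = c := huniq p (Finset.mem_filter.mp hp).1 (Finset.mem_filter.mp hp).2
    have hq2 : q.2 = c := huniq q (Finset.mem_filter.mp hq).1 (Finset.mem_filter.mp hq).2
    have hp1 : p.1 = gc c - c := by
      have h := (Finset.mem_filter.mp hp).2
      rw [hp2] at h
      exact eq_sub_of_add_eq h
    have hq1 : q.1 = gc c - c := by
      have h := (Finset.mem_filter.mp hq).2
      rw [hq2] at h
      exact eq_sub_of_add_eq h
    exact Prod.ext (hp1.trans hq1.symm) (hp2.trans hq2.symm)
  -- main counting inequality
  have main : ∑ g : G, r g + P.card * (Wf.card - 1) ≤ Fintype.card G * Wf.card := by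
    have hpt : ∀ g : G, r g + (if g ∈ P then Wf.card - 1 else 0) ≤ Wf.card := by
      intro g
      by_cases hg : g ∈ P
      · simp only [hg, if_true]
        have := hP1 g hg
        omega
      · simp only [hg, if_false]
        simpa using hrle g
    calc ∑ g : G, r g + P.card * (Wf.card - 1)
        = ∑ g : G, (r g + (if g ∈ P then Wf.card - 1 else 0)) := by
          rw [Finset.sum_add_distrib, Finset.sum_ite_mem, Finset.univ_inter,
            Finset.sum_const, smul_eq_mul]
      _ ≤ ∑ _g : G, Wf.card := Finset.sum_le_sum (fun g _ => hpt g)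
      _ = Fintype.card G * Wf.card := by
          rw [Finset.sum_const, Finset.card_univ, smul_eq_mul]
  have hnat : Cf.card * (2 * Wf.card - 1) ≤ Fintype.card G * Wf.card := by
    have he : Cf.card * (2 * Wf.card - 1) = Wf.card * Cf.card + Cf.card * (Wf.card - 1) := by
      have : 2 * Wf.card - 1 = Wf.card + (Wf.card - 1) := by omega
      rw [this, Nat.mul_add, Nat.mul_comm Cf.card Wf.card]
    rw [he, ← hsum, ← hPcard]
    exact main
  -- conclude over ℚ
  rw [hWcard, hCcard]
  have hpos : (0 : ℚ) < 2 * (Wf.card : ℚ) - 1 := by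
    have : (1 : ℚ) ≤ (Wf.card : ℚ) := by exact_mod_cast hWpos
    linarith
  rw [le_div_iff₀ hpos]
  have hcast : ((2 * Wf.card - 1 : ℕ) : ℚ) = 2 * (Wf.card : ℚ) - 1 := by
    have h1 : (1 : ℕ) ≤ 2 * Wf.card := by omega
    push_cast [Nat.cast_sub h1]
    ring
  rw [← hcast]
  exact_mod_cast hnat
end

section
/- Let G be a finite abelian group and let C be a minimal complement (for some subset W ⊆ G) with C ≠ G. Then |C| ≤ 2|G|/3. -/
open Pointwise

/-- A proper minimal complement in a finite abelian group has size at most `2|G|/3`. -/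
theorem card_minimal_complement_le_two_thirds {G : Type*} [AddCommGroup G] [Fintype G]
    (C : Set G) (hne : C ≠ Set.univ)
    (hmin : ∃ W : Set G, W + C = Set.univ ∧ ∀ C' : Set G, C' ⊂ C → W + C' ≠ Set.univ) :
    (C.ncard : ℚ) ≤ 2 * (Fintype.card G : ℚ) / 3 := by
  classical
  obtain ⟨W, hW, hmin⟩ := hmin
  by_contra hcon
  push_neg at hcon
  set n := Fintype.card G with hn
  -- translate to ℕ inequality
  have hlt : 2 * n < 3 * C.ncard := by
    have h3 : (0:ℚ) < 3 := by norm_num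
    have := (div_lt_iff₀ h3).mp hcon
    have : (2 * n : ℚ) < 3 * C.ncard := by linarith
    exact_mod_cast this
  -- for each c ∈ C, an element uniquely represented via c
  have key : ∀ c ∈ C, ∃ g : G, g - c ∈ W ∧ ∀ c' ∈ C, g - c' ∈ W → c' = c := by
    intro c hc
    have hsub : C \ {c} ⊂ C := Set.sdiff_singleton_ssubset.mpr hc
    have hne' := hmin _ hsub
    have hex : ∃ g, g ∉ W + (C \ {c}) := by
      by_contra h
      push_neg at h
      exact hne' (Set.eq_univ_of_forall h)
    obtain ⟨g, hg⟩ := hex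
    have hgmem : g ∈ W + C := hW ▸ Set.mem_univ g
    obtain ⟨w, hw, c', hc', hwc⟩ := Set.mem_add.mp hgmem
    refine ⟨g, ?_, ?_⟩
    · by_cases h : c' = c
      · subst h
        have hgw : g - c' = w := sub_eq_of_eq_add hwc.symm
        rw [hgw]; exact hw
      · have : g ∈ W + (C \ {c}) := by
          rw [← hwc]; exact Set.add_mem_add hw ⟨hc', h⟩
        exact absurd this hg
    · intro c'' hc'' hW''
      by_contra h
      have : g - c'' + c'' ∈ W + (C \ {c}) := Set.add_mem_add hW'' ⟨hc'', h⟩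
      rw [sub_add_cancel] at this
      exact hg this
  set f : G → G := fun c => if h : c ∈ C then (key c h).choose else 0 with hf
  have hfspec : ∀ c (h : c ∈ C), f c - c ∈ W ∧ ∀ c' ∈ C, f c - c' ∈ W → c' = c := by
    intro c h
    simp only [hf, dif_pos h]
    exact (key c h).choose_spec
  have hinj : Set.InjOn f C := by
    intro a ha b hb hab
    have h1 := (hfspec a ha).1
    have h2 := (hfspec b hb).2 a ha (hab ▸ h1)
    exact h2
  -- the three sets
  have huniv : (Set.univ : Set G).ncard = n := by
    simp [Set.ncard_univ, hn]
  have card_le : ∀ S T : Set G, S.ncard + T.ncard ≤ n + (S ∩ T).ncard := by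
    intro S T
    have h1 : (S ∪ T).ncard + (S ∩ T).ncard = S.ncard + T.ncard :=
      Set.ncard_union_add_ncard_inter S T (Set.toFinite S) (Set.toFinite T)
    have h2 : (S ∪ T).ncard ≤ n := by
      rw [← huniv]
      exact Set.ncard_le_ncard (Set.subset_univ _) (Set.toFinite _)
    omega
  have hWsub : ∀ w ∈ W, ∀ w' ∈ W, w = w' := by
    intro w hw w' hw'
    set U := f '' C with hU
    set A := (fun c => w + c) '' C with hA
    set B := (fun c => w' + c) '' C with hB
    have hUc : U.ncard = C.ncard := Set.ncard_image_of_injOn hinj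
    have hAc : A.ncard = C.ncard :=
      Set.ncard_image_of_injective C (add_right_injective w)
    have hBc : B.ncard = C.ncard :=
      Set.ncard_image_of_injective C (add_right_injective w')
    have h1 := card_le U A
    have h2 := card_le (U ∩ A) B
    have hpos : 0 < (U ∩ A ∩ B).ncard := by
      have hia : (U ∩ A).ncard + (U ∩ A ∩ B).ncard ≥ (U ∩ A).ncard + B.ncard - n := by omega
      omega
    obtain ⟨g, hg⟩ := Set.nonempty_of_ncard_ne_zero (by omega : (U ∩ A ∩ B).ncard ≠ 0)
    obtain ⟨⟨hgU, hgA⟩, hgB⟩ := hg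
    obtain ⟨c, hc, hfc⟩ := hgU
    obtain ⟨c1, hc1, hwc1⟩ := hgA
    obtain ⟨c2, hc2, hwc2⟩ := hgB
    have hwc1' : w + c1 = g := hwc1
    have hwc2' : w' + c2 = g := hwc2
    have hw1 : g - c1 ∈ W := by
      rw [sub_eq_of_eq_add hwc1'.symm]; exact hw
    have hw2 : g - c2 ∈ W := by
      rw [sub_eq_of_eq_add hwc2'.symm]; exact hw'
    have e1 : c1 = c := (hfspec c hc).2 c1 hc1 (hfc ▸ hw1)
    have e2 : c2 = c := (hfspec c hc).2 c2 hc2 (hfc ▸ hw2)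
    have ew : w = g - c := by rw [← e1]; exact (sub_eq_of_eq_add hwc1'.symm).symm
    have ew' : w' = g - c := by rw [← e2]; exact (sub_eq_of_eq_add hwc2'.symm).symm
    rw [ew, ew']
  -- W is nonempty
  have h0 : (0 : G) ∈ W + C := hW ▸ Set.mem_univ 0
  obtain ⟨w0, hw0, c0, hc0, -⟩ := Set.mem_add.mp h0
  -- W = {w0}
  have hWeq : W = {w0} := by
    apply Set.eq_singleton_iff_unique_mem.mpr
    exact ⟨hw0, fun x hx => hWsub x hx w0 hw0⟩
  -- then C = univ
  apply hne
  apply Set.eq_univ_of_forall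
  intro x
  have : w0 + x ∈ W + C := hW ▸ Set.mem_univ _
  obtain ⟨w, hwmem, c, hc, hsum⟩ := Set.mem_add.mp this
  have : w = w0 := by rw [hWeq] at hwmem; exact hwmem
  subst this
  have : x = c := by
    have := hsum
    exact add_left_cancel hsum.symm
  rwa [this]
end

section
/- Let G be an abelian group, a ∈ G nonzero, and W = {0, a}. A subset C ⊆ G is a minimal complement for W if and only if for every g ∈ G, C contains at least one of g and g + a, but does not contain all three of g, g + a, and g + 2a. -/
open Pointwise

/-- Characterization of minimal complements for `W = {0, a}`. -/
theorem minimal_complement_pair_iff {G : Type*} [AddCommGroup G] (a : G) (ha : a ≠ 0)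
    (C : Set G) :
    (({0, a} : Set G) + C = Set.univ ∧
      ∀ C' : Set G, C' ⊂ C → ({0, a} : Set G) + C' ≠ Set.univ) ↔
    ∀ g : G, (g ∈ C ∨ g + a ∈ C) ∧ ¬(g ∈ C ∧ g + a ∈ C ∧ g + a + a ∈ C) := by
  constructor
  · rintro ⟨hcov, hmin⟩ g
    have cov : ∀ x : G, x ∈ C ∨ x - a ∈ C := by
      intro x
      have hx : x ∈ ({0, a} : Set G) + C := by rw [hcov]; trivial
      rcases Set.mem_add.mp hx with ⟨w, hw, c, hc, hwc⟩
      rcases hw with h0 | h0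
      · left; rw [h0, zero_add] at hwc; exact hwc ▸ hc
      · right
        have : c = x - a := by rw [← hwc, h0]; abel
        rwa [← this]
    refine ⟨?_, ?_⟩
    · rcases cov (g + a) with h | h
      · right; exact h
      · left; rwa [add_sub_cancel_right] at h
    · rintro ⟨h1, h2, h3⟩
      apply hmin (C \ {g + a})
      · refine ⟨Set.diff_subset, fun hsub => ?_⟩
        have := hsub h2
        simp at this
      · ext x
        simp only [Set.mem_univ, iff_true]
        rcases cov x with hx | hx
        · by_cases hxe : x = g + a
          · refine Set.mem_add.mpr ⟨a, by simp, g, ⟨h1, ?_⟩, by rw [hxe]; abel⟩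
            simp only [Set.mem_singleton_iff]
            intro hga; exact ha (left_eq_add.mp hga)
          · exact Set.mem_add.mpr ⟨0, by simp, x, ⟨hx, hxe⟩, zero_add x⟩
        · by_cases hxe : x - a = g + a
          · have hx2 : x = g + a + a := sub_eq_iff_eq_add.mp hxe
            refine Set.mem_add.mpr ⟨0, by simp, x, ⟨hx2 ▸ h3, ?_⟩, zero_add x⟩
            simp only [Set.mem_singleton_iff]
            intro hga
            exact ha (left_eq_add.mp (hx2.symm.trans hga).symm)
          · exact Set.mem_add.mpr ⟨a, by simp, x - a, ⟨hx, hxe⟩, by abel⟩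
  · intro h
    have hcov : ({0, a} : Set G) + C = Set.univ := by
      ext x
      simp only [Set.mem_univ, iff_true]
      rcases (h (x - a)).1 with hx | hx
      · exact Set.mem_add.mpr ⟨a, by simp, x - a, hx, by abel⟩
      · rw [sub_add_cancel] at hx
        exact Set.mem_add.mpr ⟨0, by simp, x, hx, zero_add x⟩
    refine ⟨hcov, fun C' hsub hC' => ?_⟩
    obtain ⟨c, hcC, hcC'⟩ := Set.exists_of_ssubset hsub
    have hget : ∀ x : G, x ∈ C' ∨ x - a ∈ C' := by
      intro x
      have hx : x ∈ ({0, a} : Set G) + C' := by rw [hC']; trivial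
      rcases Set.mem_add.mp hx with ⟨w, hw, d, hd, hwd⟩
      rcases hw with h0 | h0
      · left; rw [h0, zero_add] at hwd; exact hwd ▸ hd
      · right
        have : d = x - a := by rw [← hwd, h0]; abel
        rwa [← this]
    have h1 : c - a ∈ C' := (hget c).resolve_left hcC'
    have h2 : c + a ∈ C' := by
      rcases hget (c + a) with h' | h'
      · exact h'
      · rw [add_sub_cancel_right] at h'; exact absurd h' hcC'
    refine (h (c - a)).2 ⟨hsub.1 h1, ?_, ?_⟩
    · rwa [sub_add_cancel]
    · have : c - a + a + a = c + a := by abel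
      rw [this]; exact hsub.1 h2
end

section
/- Let n and k be integers with n/2 < k ≤ 2n/3, and let C = {0, 1, ..., k−1} ⊆ ℤ/nℤ. Then C is a minimal complement for W = {0, k} in ℤ/nℤ. -/
open Pointwise

private lemma mod_eq_helper {a b n : ℕ} (_hn : 0 < n) (h : a % n = b % n) (hb : b < n)
    (ha : a < 2 * n) : a = b ∨ a = b + n := by
  rcases lt_or_ge a n with h' | h'
  · left
    rwa [Nat.mod_eq_of_lt h', Nat.mod_eq_of_lt hb] at h
  · right
    rw [Nat.mod_eq_sub_mod h', Nat.mod_eq_of_lt (by omega), Nat.mod_eq_of_lt hb] at h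
    omega

/-- For `n/2 < k ≤ 2n/3`, the interval `{0, 1, …, k−1}` in `ℤ/nℤ` is a minimal complement
for `W = {0, k}`. -/
theorem interval_minimal_complement_pair (n k : ℕ)
    (h1 : (n : ℚ) / 2 < k) (h2 : (k : ℚ) ≤ 2 * n / 3) :
    (({0, (k : ZMod n)} : Set (ZMod n)) + {x : ZMod n | ∃ i : ℕ, i < k ∧ x = (i : ZMod n)}
        = Set.univ) ∧
      ∀ C' : Set (ZMod n), C' ⊂ {x : ZMod n | ∃ i : ℕ, i < k ∧ x = (i : ZMod n)} →
        ({0, (k : ZMod n)} : Set (ZMod n)) + C' ≠ Set.univ := by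
  have hnk : n < 2 * k := by
    have : (n : ℚ) < 2 * k := by linarith
    exact_mod_cast this
  have h3 : 3 * k ≤ 2 * n := by
    have : (3 : ℚ) * k ≤ 2 * n := by linarith
    exact_mod_cast this
  have hn : 0 < n := by omega
  haveI : NeZero n := ⟨by omega⟩
  have hkn : k < n := by omega
  constructor
  · ext x
    simp only [Set.mem_univ, iff_true]
    rw [Set.mem_add]
    rcases lt_or_ge x.val k with hv | hv
    · exact ⟨0, by simp, x, ⟨x.val, hv, by simp [ZMod.natCast_val]⟩, by simp⟩
    · refine ⟨(k : ZMod n), by simp, ((x.val - k : ℕ) : ZMod n),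
        ⟨x.val - k, by have := x.val_lt; omega, rfl⟩, ?_⟩
      have : ((k + (x.val - k) : ℕ) : ZMod n) = x := by
        rw [show k + (x.val - k) = x.val by omega]
        simp [ZMod.natCast_val]
      push_cast at this ⊢
      exact this
  · intro C' hC' heq
    obtain ⟨x, hxC, hxC'⟩ := Set.ssubset_iff_of_subset hC'.1 |>.mp hC'
    obtain ⟨c, hck, rfl⟩ := hxC
    rcases lt_or_ge (c + n) (2 * k) with hcase | hcase
    · -- uncovered element : k + c  (note k + c < n)
      have hkc : k + c < n := by omega
      have : ((k + c : ℕ) : ZMod n) ∈ ({0, (k : ZMod n)} : Set (ZMod n)) + C' := by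
        rw [heq]; exact Set.mem_univ _
      obtain ⟨a, ha, b, hb, hab⟩ := Set.mem_add.mp this
      obtain ⟨j, hjk, rfl⟩ := hC'.1 hb
      rcases ha with rfl | rfl
      · rw [zero_add] at hab
        have := ZMod.natCast_eq_natCast_iff' j (k + c) n |>.mp hab
        rw [Nat.mod_eq_of_lt (by omega), Nat.mod_eq_of_lt hkc] at this
        omega
      · have hab' : ((k + j : ℕ) : ZMod n) = ((k + c : ℕ) : ZMod n) := by
          push_cast; exact_mod_cast hab
        have := ZMod.natCast_eq_natCast_iff' (k + j) (k + c) n |>.mp hab'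
        have := mod_eq_helper hn this hkc (by omega)
        have hjc : j = c := by omega
        exact hxC' (hjc ▸ hb)
    · -- uncovered element : c
      have : ((c : ℕ) : ZMod n) ∈ ({0, (k : ZMod n)} : Set (ZMod n)) + C' := by
        rw [heq]; exact Set.mem_univ _
      obtain ⟨a, ha, b, hb, hab⟩ := Set.mem_add.mp this
      obtain ⟨j, hjk, rfl⟩ := hC'.1 hb
      rcases ha with rfl | rfl
      · rw [zero_add] at hab
        have := ZMod.natCast_eq_natCast_iff' j c n |>.mp hab
        rw [Nat.mod_eq_of_lt (by omega), Nat.mod_eq_of_lt (by omega)] at this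
        exact hxC' (this ▸ hb)
      · have hab' : ((k + j : ℕ) : ZMod n) = ((c : ℕ) : ZMod n) := by
          push_cast; exact_mod_cast hab
        have := ZMod.natCast_eq_natCast_iff' (k + j) c n |>.mp hab'
        have := mod_eq_helper hn this (by omega) (by omega)
        omega
end

section
/- Let n and k be positive integers with k ≤ n/2, and let C = {0, 1, ..., k−1} ⊆ ℤ/nℤ. Then C is a minimal complement for W = {0, k, k+1, ..., n−k} in ℤ/nℤ. -/
open Pointwise

/-- For `0 < k ≤ n/2`, the interval `{0, 1, …, k−1}` in `ℤ/nℤ` is a minimal complement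
for `W = {0, k, k+1, …, n−k}`. -/
theorem interval_minimal_complement (n k : ℕ) (hk : 0 < k) (hn : 0 < n) (h : 2 * k ≤ n) :
    ({x : ZMod n | x = 0 ∨ ∃ j : ℕ, k ≤ j ∧ j ≤ n - k ∧ x = (j : ZMod n)}
        + {x : ZMod n | ∃ i : ℕ, i < k ∧ x = (i : ZMod n)} = Set.univ) ∧
      ∀ C' : Set (ZMod n), C' ⊂ {x : ZMod n | ∃ i : ℕ, i < k ∧ x = (i : ZMod n)} →
        {x : ZMod n | x = 0 ∨ ∃ j : ℕ, k ≤ j ∧ j ≤ n - k ∧ x = (j : ZMod n)} + C'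
          ≠ Set.univ := by
  haveI : NeZero n := ⟨hn.ne'⟩
  have hkn : k < n := lt_of_lt_of_le (by omega) h
  have hknk : k ≤ n - k := by omega
  have hcast : ∀ a b : ℕ, a < n → b < n → (a : ZMod n) = (b : ZMod n) → a = b := by
    intro a b ha hb hab
    have := (ZMod.natCast_eq_natCast_iff a b n).mp hab
    simpa [Nat.ModEq, Nat.mod_eq_of_lt ha, Nat.mod_eq_of_lt hb] using this
  constructor
  · ext x
    simp only [Set.mem_univ, iff_true, Set.mem_add]
    obtain ⟨m, hm, rfl⟩ : ∃ m : ℕ, m < n ∧ x = (m : ZMod n) :=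
      ⟨x.val, x.val_lt, (ZMod.natCast_rightInverse x).symm⟩
    by_cases hmk : m < k
    · exact ⟨0, Or.inl rfl, (m : ZMod n), ⟨m, hmk, rfl⟩, by simp⟩
    · push_neg at hmk
      by_cases hm2 : m ≤ n - k
      · exact ⟨(m : ZMod n), Or.inr ⟨m, hmk, hm2, rfl⟩, 0, ⟨0, hk, by simp⟩, by simp⟩
      · push_neg at hm2
        refine ⟨((n - k : ℕ) : ZMod n), Or.inr ⟨n - k, hknk, le_refl _, rfl⟩,
          ((m - (n - k) : ℕ) : ZMod n), ⟨m - (n - k), by omega, rfl⟩, ?_⟩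
        rw [← Nat.cast_add]
        congr 1
        omega
  · rintro C' hC' heq
    obtain ⟨x, hxC, hxC'⟩ := Set.exists_of_ssubset hC'
    obtain ⟨i0, hi0, rfl⟩ := hxC
    have : ((i0 : ℕ) : ZMod n) ∈ {x : ZMod n | x = 0 ∨ ∃ j : ℕ, k ≤ j ∧ j ≤ n - k ∧ x = (j : ZMod n)} + C' := by
      rw [heq]; trivial
    obtain ⟨w, hw, c, hc, hwc⟩ := Set.mem_add.mp this
    obtain ⟨i, hi, rfl⟩ := hC'.1 hc
    rcases hw with h0 | ⟨j, hjk, hjn, rfl⟩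
    · subst h0
      rw [zero_add] at hwc
      have : i = i0 := hcast i i0 (lt_trans hi hkn) (lt_trans hi0 hkn) hwc
      subst this
      exact hxC' hc
    · rw [← Nat.cast_add] at hwc
      have hlt : j + i < n := by omega
      have := hcast (j + i) i0 hlt (lt_trans hi0 hkn) hwc
      omega
end

section
/- Let G be a finite abelian group of order n with a subgroup H of order m, and let k be an integer satisfying 2nm/(m + 2n) < k < m. Then no subset C of H with |C| = k is a minimal complement in G. -/
open Pointwise

/-- If `H ≤ G` has order `m`, `|G| = n`, and `2nm/(m+2n) < k < m`, then no `k`-element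
subset of `H` is a minimal complement in `G`. -/
theorem not_minimal_complement_of_subgroup {G : Type*} [AddCommGroup G] [Fintype G]
    (H : AddSubgroup G) (k : ℕ)
    (hlow : (2 * (Fintype.card G : ℚ) * Nat.card H) / (Nat.card H + 2 * Fintype.card G) < k)
    (hhigh : k < Nat.card H)
    (C : Set G) (hCH : C ⊆ (H : Set G)) (hcard : C.ncard = k) :
    ¬ ∃ W : Set G, W + C = Set.univ ∧ ∀ C' : Set G, C' ⊂ C → W + C' ≠ Set.univ := by
  classical
  rintro ⟨W, hW, hmin⟩
  set n := Fintype.card G with hn_def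
  set m := Nat.card H with hm_def
  have hn : 0 < n := Fintype.card_pos
  have hm : 0 < m := lt_of_le_of_lt (Nat.zero_le k) hhigh
  -- translate hlow into a ℕ inequality
  have hden : (0 : ℚ) < (m : ℚ) + 2 * n := by positivity
  rw [div_lt_iff₀ hden] at hlow
  have hkey : 2 * n * m < k * (m + 2 * n) := by exact_mod_cast hlow
  have hk1 : 0 < k := by nlinarith
  -- ncard of the subgroup as a set
  have hHset : (H : Set G).ncard = m := by
    rw [← Nat.card_coe_set_eq]
    exact congrArg Nat.card rfl
  have hDcard : ((H : Set G) \ C).ncard = m - k := by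
    rw [Set.ncard_diff hCH, hHset, hcard]
  -- choose, for each c ∈ C, an element not covered without c
  have hx : ∀ c ∈ C, ∃ x, x ∉ W + (C \ {c}) := by
    intro c hc
    have hsub : C \ {c} ⊂ C := by
      constructor
      · exact Set.diff_subset
      · intro hsb
        exact (hsb hc).2 rfl
    have hne := hmin _ hsub
    by_contra h
    push_neg at h
    exact hne (Set.eq_univ_iff_forall.mpr h)
  obtain ⟨f, hf⟩ : ∃ f : G → G, ∀ c ∈ C, f c ∉ W + (C \ {c}) := by
    refine ⟨fun c => if h : c ∈ C then Classical.choose (hx c h) else 0, fun c hc => ?_⟩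
    simp only [dif_pos hc]
    exact Classical.choose_spec (hx c hc)
  -- the witness decomposition of f c
  have hfw : ∀ c ∈ C, f c - c ∈ W := by
    intro c hc
    have hmemWC : f c ∈ W + C := by rw [hW]; trivial
    obtain ⟨w, hw, c', hc', hwc⟩ := Set.mem_add.mp hmemWC
    have hcc : c' = c := by
      by_contra hne
      exact hf c hc (Set.mem_add.mpr ⟨w, hw, c', ⟨hc', hne⟩, hwc⟩)
    have hwe : w = f c - c := by rw [← hwc, hcc]; abel
    rw [← hwe]; exact hw
  -- key property : other witnesses in the same coset see the complement of C
  have hP2 : ∀ c ∈ C, ∀ w ∈ W, w ≠ f c - c →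
      (QuotientAddGroup.mk w : G ⧸ H) = QuotientAddGroup.mk (f c) →
      f c - w ∈ (H : Set G) \ C := by
    intro c hc w hw hne hq
    have hmem : f c - w ∈ H := by
      have := (QuotientAddGroup.eq (s := H)).mp hq
      rwa [neg_add_eq_sub] at this
    refine ⟨hmem, ?_⟩
    intro hmemC
    apply hf c hc
    refine Set.mem_add.mpr ⟨w, hw, f c - w, ⟨hmemC, ?_⟩, by abel⟩
    intro heq
    rw [Set.mem_singleton_iff] at heq
    have h3 : f c = c + w := sub_eq_iff_eq_add.mp heq
    exact hne (by rw [h3]; abel)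
  -- f is injective on C
  have hinj : Set.InjOn f C := by
    intro c1 h1 c2 h2 heq
    by_contra hne
    apply hf c1 h1
    refine Set.mem_add.mpr ⟨f c2 - c2, hfw c2 h2, c2, ⟨h2, ?_⟩, by rw [heq]; abel⟩
    intro hc
    rw [Set.mem_singleton_iff] at hc
    exact hne hc.symm
  letI : Fintype (G ⧸ H) := Fintype.ofFinite _
  -- per-coset bound
  have hfiber : ∀ q : G ⧸ H,
      {c | c ∈ C ∧ (QuotientAddGroup.mk (f c) : G ⧸ H) = q}.ncard ≤ 2 * (m - k) := by
    intro q
    set S : Set G := {c | c ∈ C ∧ (QuotientAddGroup.mk (f c) : G ⧸ H) = q} with hS_def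
    rcases S.eq_empty_or_nonempty with hS | ⟨c₀, hc₀C, hc₀q⟩
    · simp [hS]
    have hqmk : ∀ c ∈ C, (QuotientAddGroup.mk (f c - c) : G ⧸ H) = QuotientAddGroup.mk (f c) := by
      intro c hc
      refine (QuotientAddGroup.eq (s := H)).mpr ?_
      have : -(f c - c) + f c = c := by abel
      rw [this]
      exact hCH hc
    obtain ⟨w1, hw1W, hw1q⟩ : ∃ w1 ∈ W, (QuotientAddGroup.mk w1 : G ⧸ H) = q :=
      ⟨f c₀ - c₀, hfw c₀ hc₀C, by rw [hqmk c₀ hc₀C, hc₀q]⟩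
    -- find a second witness in the same coset
    have hcoset : {y : G | (QuotientAddGroup.mk y : G ⧸ H) = q} = (fun h => w1 + h) '' (H : Set G) := by
      ext y
      simp only [Set.mem_setOf_eq, Set.mem_image]
      constructor
      · intro hy
        refine ⟨-w1 + y, ?_, by abel⟩
        exact (QuotientAddGroup.eq (s := H)).mp (hw1q.trans hy.symm)
      · rintro ⟨h, hh, rfl⟩
        rw [← hw1q]
        exact ((QuotientAddGroup.eq (s := H)).mpr (by simpa using hh)).symm
    have hcosetcard : {y : G | (QuotientAddGroup.mk y : G ⧸ H) = q}.ncard = m := by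
      rw [hcoset, Set.ncard_image_of_injective _ (add_right_injective w1), hHset]
    have himgsub : (fun c => w1 + c) '' C ⊆ {y : G | (QuotientAddGroup.mk y : G ⧸ H) = q} := by
      rintro y ⟨c, hc, rfl⟩
      rw [hcoset]
      exact ⟨c, hCH hc, rfl⟩
    have himgcard : ((fun c => w1 + c) '' C).ncard = k := by
      rw [Set.ncard_image_of_injective _ (add_right_injective w1), hcard]
    have hssub : (fun c => w1 + c) '' C ⊂ {y : G | (QuotientAddGroup.mk y : G ⧸ H) = q} := by
      refine ⟨himgsub, fun hcontra => ?_⟩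
      have := Set.ncard_le_ncard hcontra (Set.toFinite _)
      omega
    obtain ⟨y, hyq, hynot⟩ := Set.exists_of_ssubset hssub
    have hy2 : y ∈ W + C := by rw [hW]; trivial
    obtain ⟨w2, hw2W, c', hc', hwc'⟩ := Set.mem_add.mp hy2
    have hw2q : (QuotientAddGroup.mk w2 : G ⧸ H) = q := by
      rw [← hyq, ← hwc']
      refine (QuotientAddGroup.eq (s := H)).mpr ?_
      simpa using hCH hc'
    have hw2ne : w2 ≠ w1 := by
      rintro rfl
      exact hynot ⟨c', hc', hwc'⟩
    -- S maps into two translates of H \ C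
    set T : Set G := ((fun h => w1 + h) '' ((H : Set G) \ C)) ∪
        ((fun h => w2 + h) '' ((H : Set G) \ C)) with hT_def
    have hmaps : ∀ c ∈ S, f c ∈ T := by
      rintro c ⟨hcC, hcq⟩
      have hbW : f c - c ∈ W := hfw c hcC
      by_cases hb1 : f c - c = w1
      · -- use w2
        have hne2 : w2 ≠ f c - c := by rw [hb1]; exact hw2ne
        have := hP2 c hcC w2 hw2W hne2 (by rw [hw2q, hcq])
        exact Or.inr ⟨f c - w2, this, by show w2 + (f c - w2) = f c; abel⟩
      · -- use w1
        have := hP2 c hcC w1 hw1W (fun h => hb1 h.symm) (by rw [hw1q, hcq])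
        exact Or.inl ⟨f c - w1, this, by show w1 + (f c - w1) = f c; abel⟩
    have hScard : S.ncard ≤ T.ncard :=
      Set.ncard_le_ncard_of_injOn f hmaps
        (hinj.mono (fun c hc => hc.1)) (Set.toFinite T)
    have hTcard : T.ncard ≤ 2 * (m - k) := by
      refine le_trans (Set.ncard_union_le _ _) ?_
      rw [Set.ncard_image_of_injective _ (add_right_injective w1),
        Set.ncard_image_of_injective _ (add_right_injective w2), hDcard]
      omega
    exact le_trans hScard hTcard
  -- sum over cosets
  set s : Finset G := C.toFinite.toFinset with hs_def
  have hscard : s.card = k := by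
    rw [← hcard, ← Set.ncard_coe_finset, hs_def, Set.Finite.coe_toFinset]
  have hsum : s.card = ∑ q : G ⧸ H,
      (s.filter fun c => (QuotientAddGroup.mk (f c) : G ⧸ H) = q).card :=
    Finset.card_eq_sum_card_fiberwise (fun c _ => Finset.mem_univ _)
  have hbound : ∀ q : G ⧸ H,
      (s.filter fun c => (QuotientAddGroup.mk (f c) : G ⧸ H) = q).card ≤ 2 * (m - k) := by
    intro q
    have hcoe : ((s.filter fun c => (QuotientAddGroup.mk (f c) : G ⧸ H) = q) : Set G)
        = {c | c ∈ C ∧ (QuotientAddGroup.mk (f c) : G ⧸ H) = q} := by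
      ext c
      simp only [hs_def, Finset.coe_filter, Set.Finite.mem_toFinset, Set.mem_setOf_eq]
    have := hfiber q
    rwa [← hcoe, Set.ncard_coe_finset] at this
  have hmain : k ≤ Fintype.card (G ⧸ H) * (2 * (m - k)) := by
    calc k = s.card := hscard.symm
    _ = ∑ q : G ⧸ H, (s.filter fun c => (QuotientAddGroup.mk (f c) : G ⧸ H) = q).card := hsum
    _ ≤ ∑ _q : G ⧸ H, 2 * (m - k) := Finset.sum_le_sum (fun q _ => hbound q)
    _ = Fintype.card (G ⧸ H) * (2 * (m - k)) := by
        rw [Finset.sum_const, Finset.card_univ, smul_eq_mul]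
  -- card relation
  have hcardrel : n = Fintype.card (G ⧸ H) * m := by
    rw [hn_def, hm_def, ← Nat.card_eq_fintype_card, ← Nat.card_eq_fintype_card]
    exact AddSubgroup.card_eq_card_quotient_mul_card_addSubgroup H
  -- final contradiction
  have h1 : k * m ≤ Fintype.card (G ⧸ H) * m * (2 * (m - k)) := by
    calc k * m ≤ (Fintype.card (G ⧸ H) * (2 * (m - k))) * m :=
          Nat.mul_le_mul_right m hmain
    _ = Fintype.card (G ⧸ H) * m * (2 * (m - k)) := by ring
  rw [← hcardrel] at h1
  have h2 : n * (2 * (m - k)) + 2 * n * k = 2 * n * m := by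
    have : m - k + k = m := Nat.sub_add_cancel hhigh.le
    calc n * (2 * (m - k)) + 2 * n * k = 2 * n * ((m - k) + k) := by ring
    _ = 2 * n * m := by rw [this]
  nlinarith [hkey, h1, h2]
end

section
/- Every finite nonempty subset of an infinite abelian group G is a minimal complement in G, i.e., there exists a subset W ⊆ G such that W + C = G and no proper subset of C is a complement for W. -/
open Pointwise

/-!
Choose points `p c` (`c ∈ C`) whose pairwise differences avoid the finite set
`(C - C) + (C - C)`, which is possible because `G` is infinite, and let `W` be the complement of
the set of all `p d - e` with `d ≠ e` in `C`. Then `p d ∈ W + C'` forces `d ∈ C'`, so no proper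
subset of `C` complements `W`. And `W + C = G`: if every `g - c` with `c ∈ C` were of the form
`p d - e`, the separation of the points `p d` would force one `d` for all `c`, so the translate
`g - C` would fit into `p d - (C \ {d})`, which has fewer points.
-/

theorem exists_pairwise_sub_notMem {G : Type*} [AddGroup G] [Infinite G] {D S : Set G}
    (hD : D.Finite) (hS : S.Finite) :
    ∃ p : G → G, S.Pairwise fun c d => p c - p d ∉ D := by
  classical
  induction S, hS using Set.Finite.induction_on with
  | empty => exact ⟨id, Set.pairwise_empty _⟩
  | @insert a s ha hs ih =>
    obtain ⟨p, hp⟩ := ih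
    obtain ⟨v, hv⟩ := (hs.biUnion fun d _ =>
      (hD.image (· + p d)).union (hD.image (-· + p d))).exists_notMem
    simp only [Set.mem_iUnion, Set.mem_union, Set.mem_image, not_exists, not_or, not_and] at hv
    have hupd : ∀ d ∈ s, Function.update p a v d = p d := fun d hd =>
      Function.update_of_ne (ne_of_mem_of_not_mem hd ha) _ _
    refine ⟨Function.update p a v, .insert_of_notMem ha ?_ fun d hd => ?_⟩
    · intro c hc d hd hcd
      rw [hupd c hc, hupd d hd]
      exact hp hc hd hcd
    · rw [Function.update_self, hupd d hd]
      exact ⟨fun h => (hv d hd).1 _ h (sub_add_cancel v (p d)),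
        fun h => (hv d hd).2 _ h (by simp)⟩

theorem Set.Finite.not_mapsTo_sdiff_singleton {α : Type*} {C : Set α} {f : α → α} {a : α}
    (hC : C.Finite) (hf : C.InjOn f) (ha : a ∈ C) : ¬ C.MapsTo f (C \ {a}) := fun hmaps =>
  (Set.ncard_le_ncard_of_injOn f hmaps hf hC.sdiff).not_gt
    (Set.ncard_sdiff_singleton_lt_of_mem ha hC)

section

variable {G : Type*} [AddCommGroup G]

def offDiagonalDiffs (p : G → G) (C : Set G) : Set G :=
  {x | ∃ d ∈ C, ∃ e ∈ C, e ≠ d ∧ x = p d - e}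

theorem eq_of_sub_eq_sub_of_pairwise {p : G → G} {C : Set G}
    (hp : C.Pairwise fun c d => p c - p d ∉ (C - C) + (C - C)) {g c c' d d' e e' : G}
    (hc : c ∈ C) (hc' : c' ∈ C) (hd : d ∈ C) (hd' : d' ∈ C) (he : e ∈ C) (he' : e' ∈ C)
    (h : g - c = p d - e) (h' : g - c' = p d' - e') : d = d' := by
  refine hp.eq hd hd' fun hD => hD ?_
  have hdiff : p d - p d' = (e - c) + (c' - e') := by
    rw [sub_eq_iff_eq_add.mp h.symm, sub_eq_iff_eq_add.mp h'.symm]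
    abel
  exact hdiff ▸ Set.add_mem_add (Set.sub_mem_sub he hc) (Set.sub_mem_sub hc' he')

theorem exists_sub_notMem_offDiagonalDiffs {p : G → G} {C : Set G} (hC : C.Finite)
    (hne : C.Nonempty) (hp : C.Pairwise fun c d => p c - p d ∉ (C - C) + (C - C)) (g : G) :
    ∃ c ∈ C, g - c ∉ offDiagonalDiffs p C := by
  by_contra! hall
  choose d hd e he hed heq using hall
  obtain ⟨c₀, hc₀⟩ := hne
  have hd₀ : ∀ c (hc : c ∈ C), d c hc = d c₀ hc₀ := fun c hc =>
    eq_of_sub_eq_sub_of_pairwise hp hc hc₀ (hd c hc) (hd c₀ hc₀) (he c hc) (he c₀ hc₀)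
      (heq c hc) (heq c₀ hc₀)
  refine hC.not_mapsTo_sdiff_singleton (f := (· - (g - p (d c₀ hc₀)))) sub_left_injective.injOn
    (hd c₀ hc₀) fun c hc => ?_
  have hce : c - (g - p (d c₀ hc₀)) = e c hc := by
    rw [← hd₀ c hc, sub_eq_iff_eq_add.mp (heq c hc).symm]
    abel
  show c - _ ∈ _
  rw [hce]
  exact ⟨he c hc, hd₀ c hc ▸ hed c hc⟩

end

/-- Every finite nonempty subset of an infinite abelian group is a minimal complement. -/
theorem finite_subset_is_minimal_complement {G : Type*} [AddCommGroup G] [Infinite G]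
    (C : Set G) (hfin : C.Finite) (hne : C.Nonempty) :
    ∃ W : Set G, W + C = Set.univ ∧ ∀ C' : Set G, C' ⊂ C → W + C' ≠ Set.univ := by
  obtain ⟨p, hp⟩ := exists_pairwise_sub_notMem ((hfin.sub hfin).add (hfin.sub hfin)) hfin
  refine ⟨(offDiagonalDiffs p C)ᶜ, Set.eq_univ_of_forall fun g => ?_, fun C' hC' hcover => ?_⟩
  · obtain ⟨c, hc, hgc⟩ := exists_sub_notMem_offDiagonalDiffs hfin hne hp g
    exact ⟨g - c, hgc, c, hc, sub_add_cancel g c⟩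
  · obtain ⟨d, hdC, hdC'⟩ := Set.exists_of_ssubset hC'
    obtain ⟨w, hw, e, he, hwe⟩ := hcover ▸ Set.mem_univ (p d)
    exact hw ⟨d, hdC, e, hC'.1 he, fun hed => hdC' (hed ▸ he), eq_sub_of_add_eq hwe⟩
end

section
/- A subset C of an abelian group G is a maximal supplement for W ⊆ G (i.e., C is a supplement for W and no proper superset of C is a supplement for W) if and only if (C − C) ∩ (W − W) = {0} and C + (W − W) = G. -/
open Pointwise

/-- `C` is a supplement for `W`: every element has at most one representation `w + c`. -/
def IsSupplement {G : Type*} [AddCommGroup G] (W C : Set G) : Prop :=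
  ∀ w₁ ∈ W, ∀ c₁ ∈ C, ∀ w₂ ∈ W, ∀ c₂ ∈ C, w₁ + c₁ = w₂ + c₂ → w₁ = w₂ ∧ c₁ = c₂

/-!
Two representations `w₁ + c₁ = w₂ + c₂` amount to a coincidence `c₁ - c₂ = w₂ - w₁` of a
difference in `C` with a difference in `W`, so `C` is a supplement exactly when
`(C - C) ∩ (W - W) ⊆ {0}`. A point `g ∉ C` can be added to a supplement without creating such
a coincidence exactly when `g ∉ C + (W - W)`; as `0 ∈ W - W`, maximality therefore means
`C + (W - W) = G`. This covering makes `C` nonempty, so the intersection then contains `0`.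
-/

theorem mem_add_sub_iff_exists_add_eq {G : Type*} [AddCommGroup G] {W C : Set G} {g : G} :
    g ∈ C + (W - W) ↔ ∃ c ∈ C, ∃ w₁ ∈ W, ∃ w₂ ∈ W, w₁ + g = w₂ + c := by
  constructor
  · rintro ⟨c, hc, _, ⟨w₂, hw₂, w₁, hw₁, rfl⟩, rfl⟩
    exact ⟨c, hc, w₁, hw₁, w₂, hw₂, show w₁ + (c + (w₂ - w₁)) = w₂ + c by abel⟩
  · rintro ⟨c, hc, w₁, hw₁, w₂, hw₂, h⟩
    refine ⟨c, hc, w₂ - w₁, ⟨w₂, hw₂, w₁, hw₁, rfl⟩, ?_⟩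
    show c + (w₂ - w₁) = g
    rw [← add_right_inj w₁, h]
    abel

namespace IsSupplement

variable {G : Type*} [AddCommGroup G] {W C D : Set G} {g : G}

theorem _root_.isSupplement_iff_sub_inter_sub_subset : IsSupplement W C ↔ (C - C) ∩ (W - W) ⊆ {0} := by
  constructor
  · rintro hC _ ⟨⟨c₁, hc₁, c₂, hc₂, rfl⟩, w₂, hw₂, w₁, hw₁, h⟩
    have heq : w₁ + c₁ = w₂ + c₂ := by
      rw [sub_eq_sub_iff_add_eq_add] at h
      rw [add_comm, ← h, add_comm]
    rw [Set.mem_singleton_iff, sub_eq_zero]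
    exact (hC w₁ hw₁ c₁ hc₁ w₂ hw₂ c₂ hc₂ heq).2
  · intro hC w₁ hw₁ c₁ hc₁ w₂ hw₂ c₂ hc₂ heq
    have hdiff : c₁ - c₂ ∈ (C - C) ∩ (W - W) :=
      ⟨⟨c₁, hc₁, c₂, hc₂, rfl⟩, w₂, hw₂, w₁, hw₁, by
        rw [sub_eq_sub_iff_add_eq_add, ← heq, add_comm]⟩
    obtain rfl : c₁ = c₂ := sub_eq_zero.1 (hC hdiff)
    exact ⟨add_right_cancel heq, rfl⟩

theorem insert (hC : IsSupplement W C) (hg : g ∉ C + (W - W)) :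
    IsSupplement W (insert g C) := by
  intro w₁ hw₁ c₁ hc₁ w₂ hw₂ c₂ hc₂ heq
  rcases hc₁ with rfl | hc₁ <;> rcases hc₂ with rfl | hc₂
  · exact ⟨add_right_cancel heq, rfl⟩
  · exact absurd (mem_add_sub_iff_exists_add_eq.2 ⟨c₂, hc₂, w₁, hw₁, w₂, hw₂, heq⟩) hg
  · exact absurd (mem_add_sub_iff_exists_add_eq.2 ⟨c₁, hc₁, w₂, hw₂, w₁, hw₁, heq.symm⟩) hg
  · exact hC w₁ hw₁ c₁ hc₁ w₂ hw₂ c₂ hc₂ heq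

theorem mem_of_mem_add_sub (hD : IsSupplement W D) (hCD : C ⊆ D) (hgD : g ∈ D)
    (hg : g ∈ C + (W - W)) : g ∈ C := by
  obtain ⟨c, hc, w₁, hw₁, w₂, hw₂, heq⟩ := mem_add_sub_iff_exists_add_eq.1 hg
  rw [(hD w₁ hw₁ g hgD w₂ hw₂ c (hCD hc) heq).2]
  exact hc

theorem maximal_iff_add_sub_eq_univ (hW : W.Nonempty) :
    (IsSupplement W C ∧ ∀ D : Set G, C ⊂ D → ¬IsSupplement W D) ↔
      (IsSupplement W C ∧ C + (W - W) = Set.univ) := by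
  refine and_congr_right fun hC => ⟨fun hmax => ?_, fun hcov D hCD hD => ?_⟩
  · refine Set.eq_univ_of_forall fun g => by_contra fun hg => ?_
    have hgC : g ∉ C := fun h => hg (Set.subset_add_left C hW.zero_mem_sub h)
    exact hmax _ (Set.ssubset_insert hgC) (hC.insert hg)
  · obtain ⟨g, hgD, hgC⟩ := Set.exists_of_ssubset hCD
    exact hgC (hD.mem_of_mem_add_sub hCD.subset hgD (hcov ▸ Set.mem_univ g))

end IsSupplement

/-- `C` is a maximal supplement for a nonempty `W` iff `(C−C) ∩ (W−W) = {0}` and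
`C + (W − W) = G`. -/
theorem maximal_supplement_iff {G : Type*} [AddCommGroup G] (W C : Set G)
    (hW : W.Nonempty) :
    (IsSupplement W C ∧ ∀ D : Set G, C ⊂ D → ¬ IsSupplement W D) ↔
      ((C - C) ∩ (W - W) = {0} ∧ C + (W - W) = Set.univ) := by
  rw [IsSupplement.maximal_iff_add_sub_eq_univ hW, isSupplement_iff_sub_inter_sub_subset]
  refine and_congr_left fun hcov => Set.Nonempty.subset_singleton_iff ⟨0, ?_, hW.zero_mem_sub⟩
  have hCne : C.Nonempty := (hcov ▸ Set.univ_nonempty : (C + (W - W)).Nonempty).of_add_left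
  exact hCne.zero_mem_sub
end

section
/- If a subset C of an abelian group G is a maximal supplement (for some subset W ⊆ G), then C is solid, i.e., there is no set D properly containing C with D − D = C − C. -/
open Pointwise

/-- Every maximal supplement is solid. -/
theorem maximal_supplement_is_solid {G : Type*} [AddCommGroup G] (C : Set G)
    (hmax : ∃ W : Set G, IsSupplement W C ∧ ∀ D : Set G, C ⊂ D → ¬ IsSupplement W D) :
    ¬ ∃ D : Set G, C ⊂ D ∧ D - D = C - C := by
  rintro ⟨D, hCD, hDD⟩
  obtain ⟨W, hsupp, hm⟩ := hmax
  apply hm D hCD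
  intro w₁ hw₁ d₁ hd₁ w₂ hw₂ d₂ hd₂ heq
  have hmem : d₁ - d₂ ∈ C - C := by
    rw [← hDD]; exact Set.sub_mem_sub hd₁ hd₂
  rw [Set.mem_sub] at hmem
  obtain ⟨c₁, hc₁, c₂, hc₂, hc⟩ := hmem
  have h1 : w₁ - w₂ = d₂ - d₁ := by
    rw [sub_eq_sub_iff_add_eq_add, heq, add_comm]
  have h2 : c₂ - c₁ = d₂ - d₁ := by rw [← neg_sub c₁, hc, neg_sub]
  have h3 : w₁ - w₂ = c₂ - c₁ := h1.trans h2.symm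
  have heq2 : w₁ + c₁ = w₂ + c₂ := by
    rw [sub_eq_sub_iff_add_eq_add] at h3; rw [h3, add_comm]
  obtain ⟨hw, hcc⟩ := hsupp w₁ hw₁ c₁ hc₁ w₂ hw₂ c₂ hc₂ heq2
  refine ⟨hw, sub_eq_zero.mp ?_⟩
  rw [← hc, hcc, sub_self]
end

section
/- Let G be an abelian group and C ⊆ G a nonempty solid subset. If W ⊆ G satisfies G \ (W − W) = (C − C) \ {0}, then C is a maximal supplement for W in G. -/
open Pointwise

/-- If `C` is nonempty and solid, and `G \ (W − W) = (C − C) \ {0}`, then `C` is a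
maximal supplement for `W`. -/
theorem maximal_supplement_of_solid {G : Type*} [AddCommGroup G] (C W : Set G)
    (hne : C.Nonempty)
    (hsolid : ¬ ∃ D : Set G, C ⊂ D ∧ D - D = C - C)
    (hW : Set.univ \ (W - W) = (C - C) \ {0}) :
    IsSupplement W C ∧ ∀ D : Set G, C ⊂ D → ¬ IsSupplement W D := by
  have key : ∀ c₁ c₂ : G, c₁ - c₂ ∈ C - C → c₁ ≠ c₂ → c₁ - c₂ ∉ W - W := by
    intro c₁ c₂ hmem hne hWW
    have h1 : c₁ - c₂ ∈ (C - C) \ ({0} : Set G) := ⟨hmem, by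
      simp only [Set.mem_singleton_iff, sub_eq_zero]; exact hne⟩
    rw [← hW] at h1
    exact h1.2 hWW
  constructor
  · intro w₁ hw₁ c₁ hc₁ w₂ hw₂ c₂ hc₂ heq
    have hceq : c₁ = c₂ := by
      by_contra hcne
      have hmem : c₁ - c₂ ∈ C - C := Set.sub_mem_sub hc₁ hc₂
      have hWW : c₁ - c₂ ∈ W - W := by
        have : c₁ - c₂ = w₂ - w₁ := by
          rw [sub_eq_sub_iff_add_eq_add, add_comm]; exact heq
        rw [this]; exact Set.sub_mem_sub hw₂ hw₁
      exact key c₁ c₂ hmem hcne hWW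
    refine ⟨?_, hceq⟩
    have : w₁ + c₁ = w₂ + c₁ := by rw [heq, hceq]
    exact add_right_cancel this
  · intro D hCD hsupp
    apply hsolid
    refine ⟨D, hCD, ?_⟩
    apply Set.Subset.antisymm
    · rintro x ⟨d₁, hd₁, d₂, hd₂, rfl⟩
      by_cases hdd : d₁ = d₂
      · subst hdd
        obtain ⟨c, hc⟩ := hne
        simpa using Set.sub_mem_sub hc hc
      · by_contra hnot
        have hnz : d₁ - d₂ ∉ (C - C) \ ({0} : Set G) := fun h => hnot h.1
        rw [← hW] at hnz
        have hWW : d₁ - d₂ ∈ W - W := by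
          by_contra h
          exact hnz ⟨Set.mem_univ _, h⟩
        obtain ⟨w₁, hw₁, w₂, hw₂, hw⟩ := hWW
        have heq : w₂ + d₁ = w₁ + d₂ := by
          rw [add_comm w₂ d₁]; exact (sub_eq_sub_iff_add_eq_add.mp hw).symm
        exact hdd ((hsupp w₂ hw₂ d₁ hd₁ w₁ hw₁ d₂ hd₂ heq).2)
    · rintro x ⟨c₁, hc₁, c₂, hc₂, rfl⟩
      exact Set.sub_mem_sub (hCD.1 hc₁) (hCD.1 hc₂)
end

section
/- Every finite nonempty solid subset C of an infinite abelian group G is a maximal supplement in G, i.e., there exists W ⊆ G such that C is a supplement for W and no proper superset of C is a supplement for W. -/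
/-!
For nonempty solid `C`, every `x ∉ C` has some `c ∈ C` with `x - c ∉ C - C`, since otherwise
`insert x C` has the same difference set as `C`. So it suffices to find `W` with
`W - W = {0} ∪ (C - C)ᶜ`: the inclusion `⊆` makes `C` a supplement for `W`, and `x - c ∈ W - W`
gives two representations `w₂ + x = w₁ + c` in any `D ⊋ C` containing `x`. Such a `W` is built
by transfinite recursion along an enumeration of `(C - C)ᶜ` of order type `|G|`: for the `α`-th
element `d`, add a pair `{t, t + d}` whose points avoid `W_α + (C - C)`, where `W_α` is the union
of the earlier pairs. Since `W_α` has fewer than `|G|` elements and `C - C` is finite, such `t`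
exists in the infinite group `G`.
-/

open Pointwise

open Cardinal Set

universe u

section

variable {G : Type u} [AddCommGroup G]

lemma isSupplement_iff {W C : Set G} :
    IsSupplement W C ↔ ∀ w₁ ∈ W, ∀ w₂ ∈ W, w₁ - w₂ ∈ C - C → w₁ = w₂ := by
  refine ⟨fun h w₁ hw₁ w₂ hw₂ ⟨c₂, hc₂, c₁, hc₁, hc⟩ => ?_,
    fun h w₁ hw₁ c₁ hc₁ w₂ hw₂ c₂ hc₂ he => ?_⟩
  · exact (h w₁ hw₁ c₁ hc₁ w₂ hw₂ c₂ hc₂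
      ((sub_eq_sub_iff_add_eq_add.1 hc.symm).trans (add_comm _ _))).1
  · obtain rfl := h w₁ hw₁ w₂ hw₂
      ⟨c₂, hc₂, c₁, hc₁, sub_eq_sub_iff_add_eq_add.2 ((add_comm _ _).trans he.symm)⟩
    exact ⟨rfl, add_left_cancel he⟩

lemma exists_sub_notMem_sub_of_solid {C : Set G} (hne : C.Nonempty)
    (hsolid : ¬ ∃ D : Set G, C ⊂ D ∧ D - D = C - C) {x : G} (hx : x ∉ C) :
    ∃ c ∈ C, x - c ∉ C - C := by
  by_contra! h
  refine hsolid ⟨insert x C, ssubset_insert hx, (sub_subset_sub (subset_insert _ _)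
    (subset_insert _ _)).antisymm' ?_⟩
  rintro _ ⟨u, hu | hu, v, hv | hv, rfl⟩ <;> dsimp only
  · obtain ⟨c, hc⟩ := hne
    rw [hu, hv, sub_self, ← sub_self c]
    exact sub_mem_sub hc hc
  · exact hu ▸ h v hv
  · rw [hv, ← neg_sub C C, mem_neg, neg_sub]
    exact h u hu
  · exact sub_mem_sub hu hv

lemma exists_disjoint_pair_of_mk_lt [Infinite G] {A : Set G} (hA : #A < #G) (d : G) :
    ∃ s : G, Disjoint ({s, s + d} : Set G) A := by
  have hsmall : #(A ∪ (· + d) ⁻¹' A : Set G) < #G :=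
    (mk_union_le _ _).trans_lt (add_lt_of_lt (aleph0_le_mk G) hA
      ((mk_preimage_of_injective _ _ (add_left_injective d)).trans_lt hA))
  obtain ⟨s, hs⟩ : (A ∪ (· + d) ⁻¹' A)ᶜ.Nonempty := nonempty_compl.2 fun h => by
    simp [h] at hsmall
  exact ⟨s, by simpa [disjoint_insert_left, not_or] using hs⟩

section Greedy

variable {ι : Type u} [LinearOrder ι] [WellFoundedLT ι] (S : Set G) (x : ι → G)

/-- `Classical.epsilon` returns junk only when no admissible `t` exists; `greedyPair_disjoint`
rules this out when the earlier stages are small. -/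
noncomputable def greedyBase : ι → G :=
  wellFounded_lt.fix fun α base => Classical.epsilon fun s =>
    Disjoint ({s, s + x α} : Set G) ((⋃ β : Iio α, {base β β.2, base β β.2 + x β}) + S)

def greedyPair (α : ι) : Set G := {greedyBase S x α, greedyBase S x α + x α}

def greedySet : Set G := ⋃ α, greedyPair S x α

lemma mk_iUnion_greedyPair_lt [Infinite G] (hι : ∀ α : ι, #(Iio α) < #G) (α : ι) :
    #(⋃ β : Iio α, greedyPair S x β) < #G :=
  calc _ ≤ sum fun β : Iio α => #(greedyPair S x β) := mk_iUnion_le_sum_mk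
    _ ≤ sum fun _ : Iio α => 2 := sum_le_sum _ _ fun β =>
        mk_insert_le.trans (by simp [one_add_one_eq_two])
    _ = #(Iio α) * 2 := sum_const' _ _
    _ < #G := mul_lt_of_lt (aleph0_le_mk G) (hι α) (natCast_lt_aleph0.trans_le (aleph0_le_mk G))

variable {S x}

lemma greedyPair_disjoint [Infinite G] (hS : #S < #G) (hι : ∀ α : ι, #(Iio α) < #G) (α : ι) :
    Disjoint (greedyPair S x α) ((⋃ β : Iio α, greedyPair S x β) + S) := by
  rw [greedyPair, greedyBase, wellFounded_lt.fix_eq]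
  exact Classical.epsilon_spec <| exists_disjoint_pair_of_mk_lt ((mk_add_le).trans_lt
    (mul_lt_of_lt (aleph0_le_mk G) (mk_iUnion_greedyPair_lt S x hι α) hS)) _

lemma sub_mem_sub_greedySet (α : ι) : x α ∈ greedySet S x - greedySet S x :=
  ⟨_, mem_iUnion_of_mem α (Or.inr rfl), _, mem_iUnion_of_mem α (Or.inl rfl),
    add_sub_cancel_left _ _⟩

lemma sub_notMem_of_mem_greedyPair_of_lt [Infinite G] (hS : #S < #G)
    (hι : ∀ α : ι, #(Iio α) < #G) {α β : ι} (hβα : β < α) {w w' : G}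
    (hw : w ∈ greedyPair S x α) (hw' : w' ∈ greedyPair S x β) : w - w' ∉ S := fun h =>
  (greedyPair_disjoint hS hι α).notMem_of_mem_left hw
    ⟨w', mem_iUnion_of_mem ⟨β, hβα⟩ hw', w - w', h, add_sub_cancel _ _⟩

lemma eq_of_sub_mem_of_mem_greedySet [Infinite G] (hS : #S < #G) (hS_neg : -S = S)
    (hι : ∀ α : ι, #(Iio α) < #G) (hx : ∀ α, x α ∉ S) {w w' : G}
    (hw : w ∈ greedySet S x) (hw' : w' ∈ greedySet S x) (h : w - w' ∈ S) : w = w' := by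
  have hS_neg' : ∀ {g}, g ∈ S → -g ∈ S := fun hg => hS_neg ▸ neg_mem_neg.2 hg
  obtain ⟨α, hα⟩ := mem_iUnion.1 hw
  obtain ⟨β, hβ⟩ := mem_iUnion.1 hw'
  rcases lt_trichotomy α β with hlt | rfl | hlt
  · exact absurd (neg_sub w w' ▸ hS_neg' h) (sub_notMem_of_mem_greedyPair_of_lt hS hι hlt hβ hα)
  · rcases hα with rfl | rfl <;> rcases hβ with rfl | rfl
    · rfl
    · exact absurd (by simpa using hS_neg' h) (hx α)
    · exact absurd (by simpa using h) (hx α)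
    · rfl
  · exact absurd h (sub_notMem_of_mem_greedyPair_of_lt hS hι hlt hα hβ)

end Greedy

theorem exists_sub_self_eq_insert_zero_compl [Infinite G] {S : Set G} (hS : #S < #G)
    (hS_neg : -S = S) : ∃ W : Set G, W - W = insert 0 Sᶜ := by
  obtain ⟨e⟩ : Nonempty ((#G).ord.ToType ≃ ↥Sᶜ) :=
    Cardinal.eq.1 (by rw [mk_ord_toType, mk_compl_of_infinite S hS])
  have hι (α : (#G).ord.ToType) : #(Iio α) < #G := by simpa using mk_Iio_lt α
  have hx (α) : (e α : G) ∉ S := (e α).2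
  set W := greedySet S fun α => (e α : G)
  have hcompl : Sᶜ ⊆ W - W := fun y hy => by
    simpa using sub_mem_sub_greedySet (S := S) (x := fun α => (e α : G)) (e.symm ⟨y, hy⟩)
  obtain ⟨y, hy⟩ : Sᶜ.Nonempty := nonempty_compl.2 fun h => by simp [h] at hS
  obtain ⟨w, hw, -⟩ := hcompl hy
  refine ⟨W, subset_antisymm ?_ (insert_subset (sub_self w ▸ sub_mem_sub hw hw) hcompl)⟩
  rintro _ ⟨w₁, hw₁, w₂, hw₂, rfl⟩
  by_cases h : w₁ - w₂ ∈ S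
  · exact .inl (sub_eq_zero.2 (eq_of_sub_mem_of_mem_greedySet hS hS_neg hι hx hw₁ hw₂ h))
  · exact .inr h

end

/-- Every finite nonempty solid subset of an infinite abelian group is a maximal
supplement. -/
theorem solid_finite_is_maximal_supplement {G : Type*} [AddCommGroup G] [Infinite G]
    (C : Set G) (hfin : C.Finite) (hne : C.Nonempty)
    (hsolid : ¬ ∃ D : Set G, C ⊂ D ∧ D - D = C - C) :
    ∃ W : Set G, IsSupplement W C ∧ ∀ D : Set G, C ⊂ D → ¬ IsSupplement W D := by
  obtain ⟨W, hW⟩ := exists_sub_self_eq_insert_zero_compl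
    ((hfin.sub hfin).lt_aleph0.trans_le (aleph0_le_mk G)) (neg_sub C C)
  refine ⟨W, isSupplement_iff.2 fun w₁ hw₁ w₂ hw₂ h => ?_, fun D hCD hD => ?_⟩
  · have : w₁ - w₂ ∈ insert 0 (C - C)ᶜ := hW ▸ sub_mem_sub hw₁ hw₂
    simpa [h, sub_eq_zero] using this
  · obtain ⟨y, hyD, hyC⟩ := exists_of_ssubset hCD
    obtain ⟨c, hc, hyc⟩ := exists_sub_notMem_sub_of_solid hne hsolid hyC
    obtain ⟨w₁, hw₁, w₂, hw₂, hw : w₁ - w₂ = y - c⟩ : y - c ∈ W - W := hW ▸ Or.inr hyc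
    have hw₁₂ := isSupplement_iff.1 hD w₁ hw₁ w₂ hw₂ (hw ▸ sub_mem_sub hyD (hCD.1 hc))
    rw [hw₁₂, sub_self, eq_comm, sub_eq_zero] at hw
    exact hyC (hw ▸ hc)
end

section
/- Let H be a subgroup of an abelian group G and let S ⊆ G be H-invariant (i.e., S + h = S for all h ∈ H). Then S is a minimal complement in G if and only if the image of S in G/H is a minimal complement in G/H. -/
/-!
An `H`-invariant `S` is the full preimage `π⁻¹ T` of its image `T` in `G/H`, and
`W + π⁻¹ T = π⁻¹ (π W + T)`. So complements of `S` push forward along `π`, and complements of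
`T` lift along any section of `π`. Minimality survives both: downstairs because proper subsets
of `T` pull back to proper subsets of `S`, upstairs because each element of a minimal
complement is the only one representing some point, and that uniqueness lifts.
-/

open Pointwise Set

def IsMinimalComplement {G : Type*} [Add G] (W C : Set G) : Prop :=
  W + C = univ ∧ ∀ C' ⊂ C, W + C' ≠ univ

section Add

variable {G : Type*} [Add G] {W C : Set G}

theorem isMinimalComplement_iff_diff_singleton :
    IsMinimalComplement W C ↔ W + C = univ ∧ ∀ c ∈ C, W + (C \ {c}) ≠ univ := by
  refine and_congr_right fun _ => ⟨fun h c hc => h _ (sdiff_singleton_ssubset.mpr hc), ?_⟩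
  intro h C' hC' hcover
  obtain ⟨c, hc, hcC'⟩ := exists_of_ssubset hC'
  refine h c hc (univ_subset_iff.mp (hcover ▸ add_subset_add_left ?_))
  exact fun x hx => ⟨hC'.1 hx, fun hxc => hcC' (hxc ▸ hx)⟩

theorem IsMinimalComplement.exists_add_notMem_add_diff (h : IsMinimalComplement W C)
    {c : G} (hc : c ∈ C) : ∃ w ∈ W, w + c ∉ W + (C \ {c}) := by
  obtain ⟨g, hg⟩ := (ne_univ_iff_exists_notMem _).mp
    ((isMinimalComplement_iff_diff_singleton.mp h).2 c hc)
  obtain ⟨w, hw, c', hc', rfl⟩ : g ∈ W + C := h.1 ▸ mem_univ g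
  obtain rfl : c' = c := by_contra fun hne => hg ⟨w, hw, c', ⟨hc', hne⟩, rfl⟩
  exact ⟨w, hw, hg⟩

end Add

section Hom

variable {G K : Type*} [AddGroup G] [AddGroup K] (f : G →+ K)

theorem add_preimage_eq_preimage_image_add (W : Set G) (T : Set K) :
    W + f ⁻¹' T = f ⁻¹' (f '' W + T) := by
  ext g
  constructor
  · rintro ⟨w, hw, t, ht, rfl⟩
    exact ⟨f w, mem_image_of_mem f hw, f t, ht, (map_add f w t).symm⟩
  · rintro ⟨_, ⟨w, hw, rfl⟩, t, ht, hsum⟩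
    refine ⟨w, hw, -w + g, ?_, add_neg_cancel_left w g⟩
    rwa [mem_preimage, map_add, map_neg, ← hsum, neg_add_cancel_left]

theorem IsMinimalComplement.image_of_preimage (hf : Function.Surjective f) {W : Set G}
    {T : Set K} (h : IsMinimalComplement W (f ⁻¹' T)) : IsMinimalComplement (f '' W) T := by
  have covers_iff (T' : Set K) : W + f ⁻¹' T' = univ ↔ f '' W + T' = univ := by
    rw [add_preimage_eq_preimage_image_add, preimage_eq_univ_iff, hf.range_eq, univ_subset_iff]
  refine ⟨(covers_iff T).mp h.1, fun T' hT' hcover => h.2 _ ?_ ((covers_iff T').mpr hcover)⟩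
  exact (hf.preimage_subset_preimage_iff.mpr hT'.1).ssubset_of_ne
    fun heq => hT'.ne (hf.preimage_injective heq)

theorem IsMinimalComplement.preimage_of_rightInverse {σ : K → G}
    (hσ : Function.RightInverse σ f) {W : Set K} {T : Set K} (h : IsMinimalComplement W T) :
    IsMinimalComplement (σ '' W) (f ⁻¹' T) := by
  have himage : f '' (σ '' W) = W := by simp only [image_image, hσ _, image_id']
  refine isMinimalComplement_iff_diff_singleton.mpr ⟨?_, fun s hs hcover => ?_⟩
  · rw [add_preimage_eq_preimage_image_add, himage, h.1, preimage_univ]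
  obtain ⟨w, hw, hunique⟩ := h.exists_add_notMem_add_diff (mem_preimage.mp hs)
  obtain ⟨_, ⟨w', hw', rfl⟩, s', ⟨hs', hs's⟩, hsum⟩ : σ w + s ∈ σ '' W + (f ⁻¹' T \ {s}) :=
    hcover ▸ mem_univ _
  have hsum_image : w' + f s' = w + f s := by
    simpa only [map_add, hσ _] using congrArg f hsum
  have hfs : f s' = f s := by_contra fun hne => hunique ⟨w', hw', f s', ⟨hs', hne⟩, hsum_image⟩
  obtain rfl : w' = w := add_right_cancel (hfs ▸ hsum_image)
  exact hs's (add_left_cancel hsum)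

theorem exists_isMinimalComplement_preimage_iff (hf : Function.Surjective f) {T : Set K} :
    (∃ W, IsMinimalComplement W (f ⁻¹' T)) ↔ ∃ W, IsMinimalComplement W T :=
  ⟨fun ⟨_, h⟩ => ⟨_, h.image_of_preimage f hf⟩,
    fun ⟨_, h⟩ => ⟨_, h.preimage_of_rightInverse f (Function.rightInverse_surjInv hf)⟩⟩

end Hom

theorem QuotientAddGroup.preimage_image_mk_eq_of_add_invariant {G : Type*} [AddCommGroup G]
    (H : AddSubgroup G) {S : Set G} (hS : ∀ h ∈ H, (fun x => x + h) '' S = S) :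
    QuotientAddGroup.mk' H ⁻¹' (QuotientAddGroup.mk' H '' S) = S := by
  rw [coe_mk', preimage_image_mk_eq_iUnion_image, iUnion_congr fun h : H => hS h h.2,
    iUnion_const]

/-- An `H`-invariant set `S` is a minimal complement in `G` iff its image in `G/H` is a
minimal complement in `G/H`. -/
theorem invariant_minimal_complement_iff {G : Type*} [AddCommGroup G] (H : AddSubgroup G)
    (S : Set G) (hS : ∀ h ∈ H, (fun x => x + h) '' S = S) :
    (∃ W : Set G, W + S = Set.univ ∧ ∀ S' : Set G, S' ⊂ S → W + S' ≠ Set.univ) ↔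
      (∃ W : Set (G ⧸ H), W + (QuotientAddGroup.mk' H '' S) = Set.univ ∧
        ∀ S' : Set (G ⧸ H), S' ⊂ QuotientAddGroup.mk' H '' S → W + S' ≠ Set.univ) := by
  change (∃ W, IsMinimalComplement W S) ↔
    ∃ W, IsMinimalComplement W (QuotientAddGroup.mk' H '' S)
  conv_lhs => rw [← QuotientAddGroup.preimage_image_mk_eq_of_add_invariant H hS]
  exact exists_isMinimalComplement_preimage_iff _ (QuotientAddGroup.mk'_surjective H)
end

section
/- The set C = {0, 1, 2} ⊆ ℤ is a complement for W = 2ℤ (i.e., W + C = ℤ), but there is no subset W' ⊆ 2ℤ for which C is a minimal complement. -/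
open Pointwise

/-- `{0,1,2}` is a complement for `2ℤ` in `ℤ`, but it is not a minimal complement for any
subset of `2ℤ`. -/
theorem zero_one_two_complement_but_not_minimal :
    ({n : ℤ | 2 ∣ n} + ({0, 1, 2} : Set ℤ) = Set.univ) ∧
      ¬ ∃ W : Set ℤ, W ⊆ {n : ℤ | 2 ∣ n} ∧ W + ({0, 1, 2} : Set ℤ) = Set.univ ∧
        ∀ C' : Set ℤ, C' ⊂ ({0, 1, 2} : Set ℤ) → W + C' ≠ Set.univ := by
  constructor
  · ext n
    simp only [Set.mem_univ, iff_true, Set.mem_add, Set.mem_setOf_eq]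
    rcases Int.even_or_odd n with ⟨k, hk⟩ | ⟨k, hk⟩
    · exact ⟨n, ⟨k, by omega⟩, 0, by simp, by ring⟩
    · exact ⟨n - 1, ⟨k, by omega⟩, 1, by simp, by ring⟩
  · rintro ⟨W, hWsub, hWc, hmin⟩
    apply hmin {0, 1}
    · constructor
      · intro x hx
        simp only [Set.mem_insert_iff, Set.mem_singleton_iff] at hx ⊢
        tauto
      · intro h
        have h2 := h (by simp : (2 : ℤ) ∈ ({0, 1, 2} : Set ℤ))
        simp only [Set.mem_insert_iff, Set.mem_singleton_iff] at h2
        omega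
    · -- show W + {0,1} = univ
      have hWeven : ∀ m : ℤ, 2 ∣ m → m ∈ W := by
        intro m hm
        have : m + 1 ∈ Set.univ := trivial
        rw [← hWc] at this
        obtain ⟨w, hw, c, hc, hwc⟩ := this
        have hw2 : (2 : ℤ) ∣ w := hWsub hw
        simp only [Set.mem_insert_iff, Set.mem_singleton_iff] at hc
        have hwc' : w + c = m + 1 := hwc
        have : w = m := by omega
        rwa [← this]
      ext n
      simp only [Set.mem_univ, iff_true, Set.mem_add]
      rcases Int.even_or_odd n with ⟨k, hk⟩ | ⟨k, hk⟩
      · exact ⟨n, hWeven n ⟨k, by omega⟩, 0, by simp, by ring⟩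
      · exact ⟨n - 1, hWeven (n - 1) ⟨k, by omega⟩, 1, by simp, by ring⟩
end

section
/- Let G be a finite abelian group of order n with a subgroup H of order m, let C ⊆ H with |C| = k and 2nm/(m+2n) < k < m, and suppose W ⊆ G satisfies W + C = G. Then the number of elements of G having a unique representation as w + c with w ∈ W, c ∈ C is at most 2n(m−k)/m, which is strictly less than k. -/
open Pointwise

/-- In the situation of Proposition 4.1, at most `2n(m−k)/m < k` elements of `G` have a
unique representation `w + c` with `w ∈ W`, `c ∈ C`. -/
theorem unique_representations_bound {G : Type*} [AddCommGroup G] [Fintype G]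
    (H : AddSubgroup G) (k : ℕ) (C W : Set G) (hCH : C ⊆ (H : Set G)) (hcard : C.ncard = k)
    (hlow : (2 * (Fintype.card G : ℚ) * Nat.card H) / (Nat.card H + 2 * Fintype.card G) < k)
    (hhigh : k < Nat.card H)
    (hcompl : W + C = Set.univ) :
    (({g : G | ∃! p : G × G, p.1 ∈ W ∧ p.2 ∈ C ∧ p.1 + p.2 = g}).ncard : ℚ)
        ≤ 2 * Fintype.card G * (Nat.card H - k) / Nat.card H ∧
      2 * (Fintype.card G : ℚ) * (Nat.card H - k) / Nat.card H < k := by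
  classical
  have hm0 : 0 < Nat.card H := Nat.card_pos
  have hn0 : 0 < Fintype.card G := Fintype.card_pos
  set n := Fintype.card G with hn
  set m := Nat.card H with hm
  have hmQ : (0:ℚ) < m := by exact_mod_cast hm0
  have hnQ : (0:ℚ) < n := by exact_mod_cast hn0
  have hkm : k < m := hhigh
  have hlow' : 2 * (n:ℚ) * m < k * (m + 2 * n) := by
    rw [div_lt_iff₀ (by positivity)] at hlow
    linarith
  have key2 : 2 * (n : ℚ) * ((m:ℚ) - k) / m < k := by
    rw [div_lt_iff₀ hmQ]
    nlinarith [hlow']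
  refine ⟨?_, key2⟩
  set S : Set G := {g : G | ∃! p : G × G, p.1 ∈ W ∧ p.2 ∈ C ∧ p.1 + p.2 = g} with hS
  have hQfin : Fintype (G ⧸ H) := Fintype.ofFinite _
  have hHfin : Fintype H := Fintype.ofFinite _
  have hGdecomp : n = Nat.card (G ⧸ H) * m := by
    rw [hn, hm, ← Nat.card_eq_fintype_card]
    exact AddSubgroup.card_eq_card_quotient_mul_card_addSubgroup H
  -- each fiber of the quotient map has m elements
  have hfiber : ∀ q : G ⧸ H,
      (Finset.univ.filter (fun g : G => (QuotientAddGroup.mk g : G ⧸ H) = q)).card = m := by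
    intro q
    obtain ⟨t, rfl⟩ := q.exists_rep
    have himg : Finset.univ.filter (fun g : G => (QuotientAddGroup.mk g : G ⧸ H) = (QuotientAddGroup.mk t : G ⧸ H))
        = Finset.image (fun h : H => t + (h : G)) Finset.univ := by
      ext g
      simp only [Finset.mem_filter, Finset.mem_univ, true_and, Finset.mem_image]
      constructor
      · intro hg
        have h1 : -g + t ∈ H := (QuotientAddGroup.eq).mp hg
        have h2 : -t + g ∈ H := by
          have := H.neg_mem h1
          simpa [neg_add_rev] using this
        exact ⟨⟨-t + g, h2⟩, by simp⟩
      · rintro ⟨h, -, rfl⟩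
        exact QuotientAddGroup.mk_add_of_mem t h.2
    have hinj : Function.Injective (fun h : H => t + (h : G)) := by
      intro a b hab
      exact Subtype.ext (by simpa using hab)
    rw [himg, Finset.card_image_of_injective _ hinj, Finset.card_univ, hm,
      Nat.card_eq_fintype_card]
  have hcover : ∀ g : G, ∃ w ∈ W, ∃ c ∈ C, w + c = g := by
    intro g
    have hg : g ∈ W + C := hcompl ▸ Set.mem_univ g
    exact Set.mem_add.mp hg
  have hwq : ∀ (w c : G), c ∈ C →
      (QuotientAddGroup.mk (w + c) : G ⧸ H) = QuotientAddGroup.mk w :=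
    fun w c hc => QuotientAddGroup.mk_add_of_mem w (hCH hc)
  -- per-fiber bound
  have hper : ∀ q : G ⧸ H,
      ((S.toFinset).filter (fun g => (QuotientAddGroup.mk g : G ⧸ H) = q)).card ≤ 2 * (m - k) := by
    intro q
    set F := Finset.univ.filter (fun g : G => (QuotientAddGroup.mk g : G ⧸ H) = q) with hF
    have hFcard : F.card = m := hfiber q
    have hsub : (S.toFinset).filter (fun g => (QuotientAddGroup.mk g : G ⧸ H) = q) ⊆ F := by
      intro g hg
      rw [Finset.mem_filter] at hg
      simp [hF, hg.2]
    by_cases hcase : 2 * k ≤ m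
    · have := Finset.card_le_card hsub
      omega
    · push_neg at hcase
      obtain ⟨t, ht⟩ := QuotientAddGroup.mk_surjective q
      obtain ⟨w1, hw1W, c1, hc1, hwc1⟩ := hcover t
      have hw1q : (QuotientAddGroup.mk w1 : G ⧸ H) = q := by
        rw [← ht, ← hwc1]; exact (hwq w1 c1 hc1).symm
      set A := Finset.image (fun c => w1 + c) C.toFinset with hA
      have hAcard : A.card = k := by
        rw [hA, Finset.card_image_of_injective _ (add_right_injective w1),
          ← Set.ncard_eq_toFinset_card', hcard]
      have hAF : A ⊆ F := by
        intro g hg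
        simp only [hA, Finset.mem_image, Set.mem_toFinset] at hg
        obtain ⟨c, hc, rfl⟩ := hg
        simp [hF, hwq w1 c hc, hw1q]
      obtain ⟨g1, hg1F, hg1A⟩ : ∃ g1 ∈ F, g1 ∉ A := by
        by_contra hcon
        push_neg at hcon
        have := Finset.card_le_card hcon
        omega
      obtain ⟨w2, hw2W, c2, hc2, hwc2⟩ := hcover g1
      have hg1q : (QuotientAddGroup.mk g1 : G ⧸ H) = q := by
        have := Finset.mem_filter.mp (hF ▸ hg1F)
        exact this.2
      have hw2q : (QuotientAddGroup.mk w2 : G ⧸ H) = q := by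
        rw [← hg1q, ← hwc2]; exact (hwq w2 c2 hc2).symm
      have hne : w2 ≠ w1 := by
        rintro rfl
        exact hg1A (by
          simp only [hA, Finset.mem_image, Set.mem_toFinset]
          exact ⟨c2, hc2, hwc2⟩)
      set B := Finset.image (fun c => w2 + c) C.toFinset with hB
      have hBcard : B.card = k := by
        rw [hB, Finset.card_image_of_injective _ (add_right_injective w2),
          ← Set.ncard_eq_toFinset_card', hcard]
      have hBF : B ⊆ F := by
        intro g hg
        simp only [hB, Finset.mem_image, Set.mem_toFinset] at hg
        obtain ⟨c, hc, rfl⟩ := hg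
        simp [hF, hwq w2 c hc, hw2q]
      have hunion : (A ∪ B).card ≤ m := by
        rw [← hFcard]
        exact Finset.card_le_card (Finset.union_subset hAF hBF)
      have hint : 2 * k - m ≤ (A ∩ B).card := by
        have := Finset.card_union_add_card_inter A B
        omega
      have hdisj : ((S.toFinset).filter (fun g => (QuotientAddGroup.mk g : G ⧸ H) = q)) ⊆ F \ (A ∩ B) := by
        intro g hg
        rw [Finset.mem_sdiff]
        refine ⟨hsub hg, ?_⟩
        intro hgAB
        rw [Finset.mem_inter] at hgAB
        obtain ⟨hgA, hgB⟩ := hgAB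
        simp only [hA, Finset.mem_image, Set.mem_toFinset] at hgA
        obtain ⟨ca, hca, hga⟩ := hgA
        simp only [hB, Finset.mem_image, Set.mem_toFinset] at hgB
        obtain ⟨cb, hcb, hgb⟩ := hgB
        have hgS : g ∈ S := by
          have hm := Finset.mem_filter.mp hg
          simpa using hm.1
        obtain ⟨p, hp, hpuniq⟩ := hgS
        have h1 := hpuniq (w1, ca) ⟨hw1W, hca, hga⟩
        have h2 := hpuniq (w2, cb) ⟨hw2W, hcb, hgb⟩
        exact hne (congrArg Prod.fst (h2.trans h1.symm))
      have hABF : A ∩ B ⊆ F := fun x hx => hAF (Finset.mem_inter.mp hx).1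
      have hcard_sdiff : (F \ (A ∩ B)).card ≤ 2 * (m - k) := by
        rw [Finset.card_sdiff_of_subset hABF]
        omega
      exact le_trans (Finset.card_le_card hdisj) hcard_sdiff
  have hSsum : S.toFinset.card
      = ∑ q : G ⧸ H, ((S.toFinset).filter (fun g => (QuotientAddGroup.mk g : G ⧸ H) = q)).card :=
    Finset.card_eq_sum_card_fiberwise (fun x _ => Finset.mem_univ _)
  have hsum_le : S.toFinset.card ≤ Nat.card (G ⧸ H) * (2 * (m - k)) := by
    rw [hSsum, Nat.card_eq_fintype_card]
    calc ∑ q : G ⧸ H, ((S.toFinset).filter (fun g => (QuotientAddGroup.mk g : G ⧸ H) = q)).card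
        ≤ ∑ _q : G ⧸ H, 2 * (m - k) := Finset.sum_le_sum (fun q _ => hper q)
      _ = Fintype.card (G ⧸ H) * (2 * (m - k)) := by
          simp [Finset.sum_const, Finset.card_univ, smul_eq_mul]
  have hnat : m * S.ncard ≤ 2 * n * (m - k) := by
    rw [Set.ncard_eq_toFinset_card']
    calc m * S.toFinset.card ≤ m * (Nat.card (G ⧸ H) * (2 * (m - k))) :=
          Nat.mul_le_mul_left _ hsum_le
      _ = (Nat.card (G ⧸ H) * m) * (2 * (m - k)) := by ring
      _ = n * (2 * (m - k)) := by rw [← hGdecomp]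
      _ = 2 * n * (m - k) := by ring
  rw [le_div_iff₀ hmQ]
  calc (S.ncard : ℚ) * m = ((m * S.ncard : ℕ) : ℚ) := by push_cast; ring
    _ ≤ ((2 * n * (m - k) : ℕ) : ℚ) := by exact_mod_cast hnat
    _ = 2 * n * ((m:ℚ) - k) := by
        push_cast [Nat.cast_sub hkm.le]
        ring
end
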